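/- Let q > 2, B ∈ ℝ, A ∈ ℝ, and let w : ℝ → ℝ be a C⁴ homoclinic solution of w'''' − 2A w'' + B² w = |w|^{q−2} w (with w and its derivatives up to order three vanishing at ±∞). Then ‖w‖_∞^{q−2} ≤ (q/2) B². -/

import Mathlib

/-! Multiplying the equation by `w'` shows that the Hamiltonian
`H = -w''' w' + w''² / 2 + A w'² - B² w² / 2 + |w|^q / q` is constant along the solution, hence
zero since `w` and its first three derivatives vanish at infinity. At a point where `|w|` is
maximal we have `w' = 0`, so there `|w|^q / q = B² w² / 2 - w''² / 2 ≤ B² w² / 2`. -/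

open Filter Topology

theorem ContDiff.hasDerivAt_iteratedDeriv {𝕜 F : Type*} [NontriviallyNormedField 𝕜]
    [NormedAddCommGroup F] [NormedSpace 𝕜 F] {n : ℕ} {f : 𝕜 → F} (hf : ContDiff 𝕜 n f) {k : ℕ}
    (hk : k < n) (x : 𝕜) : HasDerivAt (iteratedDeriv k f) (iteratedDeriv (k + 1) f x) x := by
  rw [iteratedDeriv_succ]
  exact (hf.differentiable_iteratedDeriv k (mod_cast hk) x).hasDerivAt

theorem exists_forall_abs_le_abs_of_tendsto_cocompact {β : Type*} [TopologicalSpace β]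
    [Nonempty β] {f : β → ℝ} (hf : Continuous f) (hlim : Tendsto f (cocompact β) (𝓝 0)) :
    ∃ x, ∀ y, |f y| ≤ |f x| := by
  by_cases hzero : ∀ x, f x = 0
  · exact ⟨Classical.arbitrary β, fun y => by simp [hzero]⟩
  obtain ⟨x₀, hx₀⟩ := not_forall.mp hzero
  have hsmall : ∀ᶠ y in cocompact β, |f y| < |f x₀| :=
    hlim.abs.eventually_lt_const (by simpa using hx₀)
  exact hf.abs.exists_forall_ge' x₀ (hsmall.mono fun _ => le_of_lt)

theorem HasDerivAt.eq_zero_of_forall_abs_le {f : ℝ → ℝ} {f' x : ℝ} (hf : HasDerivAt f f' x)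
    (hmax : ∀ y, |f y| ≤ |f x|) : f' = 0 := by
  rcases le_total 0 (f x) with hpos | hneg
  · refine IsLocalMax.hasDerivAt_eq_zero (Eventually.of_forall fun y => ?_) hf
    linarith [le_abs_self (f y), hmax y, abs_of_nonneg hpos]
  · refine IsLocalMin.hasDerivAt_eq_zero (Eventually.of_forall fun y => ?_) hf
    linarith [neg_abs_le (f y), hmax y, abs_of_nonpos hneg]

theorem abs_rpow_sub_two_le_of_abs_rpow_div_le {q c x : ℝ} (hq : 2 < q) (hc : 0 ≤ c)
    (h : |x| ^ q / q ≤ c * x ^ 2) : |x| ^ (q - 2) ≤ q * c := by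
  rcases eq_or_ne x 0 with rfl | hx
  · rw [abs_zero, Real.zero_rpow (by linarith)]
    positivity
  have hx2 : 0 < x ^ 2 := by positivity
  have hsplit : |x| ^ q = |x| ^ (q - 2) * x ^ 2 := by
    rw [← sq_abs, ← Real.rpow_natCast, ← Real.rpow_add (abs_pos.mpr hx)]
    norm_num
  rw [hsplit, div_le_iff₀ (by linarith)] at h
  nlinarith

section Hamiltonian

variable (A B q : ℝ) (w : ℝ → ℝ)

noncomputable def hamiltonian (s : ℝ) : ℝ :=
  -(iteratedDeriv 3 w s * iteratedDeriv 1 w s) + iteratedDeriv 2 w s ^ 2 / 2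
    + A * iteratedDeriv 1 w s ^ 2 - B ^ 2 * w s ^ 2 / 2 + |w s| ^ q / q

variable {A B q w}

theorem hasDerivAt_hamiltonian (hq : 1 < q) (hw : ContDiff ℝ 4 w) (s : ℝ) :
    HasDerivAt (hamiltonian A B q w) (-iteratedDeriv 1 w s * (iteratedDeriv 4 w s
      - 2 * A * iteratedDeriv 2 w s + B ^ 2 * w s - |w s| ^ (q - 2) * w s)) s := by
  have hw0 := hw.hasDerivAt_iteratedDeriv (k := 0) (by norm_num) s
  rw [iteratedDeriv_zero] at hw0
  have hw1 := hw.hasDerivAt_iteratedDeriv (k := 1) (by norm_num) s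
  have hw2 := hw.hasDerivAt_iteratedDeriv (k := 2) (by norm_num) s
  have hw3 := hw.hasDerivAt_iteratedDeriv (k := 3) (by norm_num) s
  have hpot := (hasDerivAt_abs_rpow (w s) hq).comp s hw0
  refine (((((hw3.mul hw1).neg.add ((hw2.pow 2).div_const 2)).add ((hw1.pow 2).const_mul A)).sub
    ((hw0.pow 2).const_mul (B ^ 2) |>.div_const 2)).add (hpot.div_const q)).congr_deriv ?_
  field_simp
  ring

theorem tendsto_hamiltonian_atTop (hq : 0 < q)
    (hlim : ∀ k ≤ 3, Tendsto (iteratedDeriv k w) atTop (𝓝 0)) :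
    Tendsto (hamiltonian A B q w) atTop (𝓝 0) := by
  have hw0 := hlim 0 (by norm_num)
  rw [iteratedDeriv_zero] at hw0
  have hw1 := hlim 1 (by norm_num)
  have hw2 := hlim 2 (by norm_num)
  have hw3 := hlim 3 (by norm_num)
  have hpot := hw0.abs.rpow_const (p := q) (Or.inr hq.le)
  rw [abs_zero, Real.zero_rpow hq.ne'] at hpot
  have htendsto : Tendsto (hamiltonian A B q w) atTop _ :=
    ((((hw3.mul hw1).neg.add ((hw2.pow 2).div_const 2)).add ((hw1.pow 2).const_mul A)).sub
      ((hw0.pow 2).const_mul (B ^ 2) |>.div_const 2)).add (hpot.div_const q)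
  simpa using htendsto

theorem hamiltonian_eq_zero (hq : 1 < q) (hw : ContDiff ℝ 4 w)
    (hode : ∀ s, iteratedDeriv 4 w s - 2 * A * iteratedDeriv 2 w s + B ^ 2 * w s
      = |w s| ^ (q - 2) * w s)
    (hlim : ∀ k ≤ 3, Tendsto (iteratedDeriv k w) atTop (𝓝 0)) (s : ℝ) :
    hamiltonian A B q w s = 0 := by
  have hderiv (t : ℝ) : HasDerivAt (hamiltonian A B q w) 0 t := by
    simpa [hode t] using hasDerivAt_hamiltonian (A := A) (B := B) hq hw t
  have hconst (t : ℝ) : hamiltonian A B q w t = hamiltonian A B q w s :=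
    is_const_of_deriv_eq_zero (fun t => (hderiv t).differentiableAt) (fun t => (hderiv t).deriv) t s
  exact tendsto_nhds_unique ((tendsto_const_nhds (f := atTop)).congr fun t => (hconst t).symm)
    (tendsto_hamiltonian_atTop (by linarith) hlim)

end Hamiltonian

/-- A-priori bound on homoclinic solutions of `w'''' − 2A w'' + B² w = |w|^{q−2} w`:
`‖w‖_∞^{q−2} ≤ (q/2) B²`. -/
theorem apriori_bound (A B q : ℝ) (hq : 2 < q) (w : ℝ → ℝ)
    (hw : ContDiff ℝ 4 w)
    (hode : ∀ s, iteratedDeriv 4 w s - 2 * A * iteratedDeriv 2 w s + B ^ 2 * w s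
      = |w s| ^ (q - 2) * w s)
    (hlim : ∀ k ≤ 3, Tendsto (iteratedDeriv k w) atTop (nhds 0) ∧
      Tendsto (iteratedDeriv k w) atBot (nhds 0)) :
    ∀ s : ℝ, |w s| ^ (q - 2) ≤ q / 2 * B ^ 2 := by
  intro s
  have hdecay : Tendsto w (cocompact ℝ) (𝓝 0) := by
    obtain ⟨htop, hbot⟩ := hlim 0 (by norm_num)
    rw [iteratedDeriv_zero] at htop hbot
    rw [cocompact_eq_atBot_atTop]
    exact hbot.sup htop
  obtain ⟨s₀, hs₀⟩ := exists_forall_abs_le_abs_of_tendsto_cocompact hw.continuous hdecay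
  have hcrit : iteratedDeriv 1 w s₀ = 0 := by
    have hderiv := hw.hasDerivAt_iteratedDeriv (k := 0) (by norm_num) s₀
    rw [iteratedDeriv_zero] at hderiv
    exact hderiv.eq_zero_of_forall_abs_le hs₀
  have hH := hamiltonian_eq_zero (by linarith) hw hode (fun k hk => (hlim k hk).1) s₀
  rw [hamiltonian, hcrit] at hH
  have hmax : |w s₀| ^ (q - 2) ≤ q * (B ^ 2 / 2) :=
    abs_rpow_sub_two_le_of_abs_rpow_div_le hq (by positivity)
      (by nlinarith [sq_nonneg (iteratedDeriv 2 w s₀)])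
  calc |w s| ^ (q - 2) ≤ |w s₀| ^ (q - 2) := Real.rpow_le_rpow (abs_nonneg _) (hs₀ s) (by linarith)
    _ ≤ q / 2 * B ^ 2 := hmax.trans_eq (by ring)
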